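/- arXiv:1706.08142 — 8 statements merged into one kernel-verified Lean document; each statement's English description precedes it below -/
import Mathlib

section
/- If f: S → T is a graph embedding (an injective map realizing an isomorphism of S onto the induced subgraph on its image), then the map θ: Q_S → Q_T defined by θ(v,i)=(f(v),i) is an injective quandle homomorphism. -/
open Classical in
/-- The quandle operation on `ℕ × Bool` associated to a graph `T`. -/
noncomputable def quandleOp (T : SimpleGraph ℕ) (x y : ℕ × Bool) : ℕ × Bool :=
  if x.1 = y.1 ∨ T.Adj x.1 y.1 then y else (y.1, !y.2)

theorem quandle_embedding_of_graph_embedding (S T : SimpleGraph ℕ) (f : ℕ → ℕ)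
    (hf : Function.Injective f)
    (hadj : ∀ u v : ℕ, S.Adj u v ↔ T.Adj (f u) (f v)) :
    Function.Injective (fun x : ℕ × Bool => (f x.1, x.2)) ∧
    (∀ x y : ℕ × Bool,
      (fun x : ℕ × Bool => (f x.1, x.2)) (quandleOp S x y)
        = quandleOp T ((fun x : ℕ × Bool => (f x.1, x.2)) x)
            ((fun x : ℕ × Bool => (f x.1, x.2)) y)) := by
  constructor
  · rintro ⟨a, i⟩ ⟨b, j⟩ h
    simp only [Prod.mk.injEq] at h
    exact Prod.ext (hf h.1) h.2
  · intro x y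
    have hcond : (x.1 = y.1 ∨ S.Adj x.1 y.1) ↔ (f x.1 = f y.1 ∨ T.Adj (f x.1) (f y.1)) := by
      constructor
      · rintro (h | h)
        · exact Or.inl (congrArg f h)
        · exact Or.inr ((hadj _ _).mp h)
      · rintro (h | h)
        · exact Or.inl (hf h)
        · exact Or.inr ((hadj _ _).mpr h)
    simp only [quandleOp]
    by_cases h : x.1 = y.1 ∨ S.Adj x.1 y.1
    · rw [if_pos h, if_pos (hcond.mp h)]
    · rw [if_neg h, if_neg (fun hc => h (hcond.mpr hc))]
end

section
/- Let S and T be combinatorial trees in which every vertex has a non-neighbor (i.e., for every x there is y≠x not adjacent to x). If ρ: Q_S → Q_T is an injective quandle homomorphism, then for every vertex v of S the first components of ρ(v,0) and ρ(v,1) are equal. -/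
theorem first_components_eq (S T : SimpleGraph ℕ)
    (hSconn : S.Connected) (hSacyc : S.IsAcyclic)
    (hTconn : T.Connected) (hTacyc : T.IsAcyclic)
    (hSnn : ∀ x : ℕ, ∃ y : ℕ, y ≠ x ∧ ¬ S.Adj x y)
    (hTnn : ∀ x : ℕ, ∃ y : ℕ, y ≠ x ∧ ¬ T.Adj x y)
    (ρ : ℕ × Bool → ℕ × Bool) (hρinj : Function.Injective ρ)
    (hρhom : ∀ x y : ℕ × Bool, ρ (quandleOp S x y) = quandleOp T (ρ x) (ρ y)) :
    ∀ v : ℕ, (ρ (v, false)).1 = (ρ (v, true)).1 := by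
  intro v
  obtain ⟨w, hw1, hw2⟩ := hSnn v
  have h1 : quandleOp S (w, false) (v, false) = (v, true) := by
    simp only [quandleOp]
    rw [if_neg]
    · rfl
    · rintro (h | h)
      · exact hw1 h
      · exact hw2 h.symm
  have h2 := hρhom (w, false) (v, false)
  rw [h1] at h2
  rw [h2]
  simp only [quandleOp]
  split <;> simp
end

section
/- Let S and T be combinatorial trees in which every vertex has a non-neighbor. If ρ: Q_S → Q_T is an injective quandle homomorphism, then the map h: V(S) → V(T) defined by h(v) = ρ_V(v,0) (the first component of ρ(v,0)) is a graph embedding of S into T. -/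
lemma quandleOp_eq_iff (G : SimpleGraph ℕ) (x y : ℕ × Bool) :
    quandleOp G x y = y ↔ (x.1 = y.1 ∨ G.Adj x.1 y.1) := by
  by_cases h : x.1 = y.1 ∨ G.Adj x.1 y.1 <;> simp [quandleOp, h, Prod.ext_iff]

theorem graph_embedding_of_quandle_embedding (S T : SimpleGraph ℕ)
    (hSconn : S.Connected) (hSacyc : S.IsAcyclic)
    (hTconn : T.Connected) (hTacyc : T.IsAcyclic)
    (hSnn : ∀ x : ℕ, ∃ y : ℕ, y ≠ x ∧ ¬ S.Adj x y)
    (hTnn : ∀ x : ℕ, ∃ y : ℕ, y ≠ x ∧ ¬ T.Adj x y)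
    (ρ : ℕ × Bool → ℕ × Bool) (hρinj : Function.Injective ρ)
    (hρhom : ∀ x y : ℕ × Bool, ρ (quandleOp S x y) = quandleOp T (ρ x) (ρ y)) :
    Function.Injective (fun v : ℕ => (ρ (v, false)).1) ∧
    (∀ u v : ℕ, S.Adj u v ↔ T.Adj ((ρ (u, false)).1) ((ρ (v, false)).1)) := by
  have key : ∀ x y : ℕ × Bool,
      (x.1 = y.1 ∨ S.Adj x.1 y.1) ↔ ((ρ x).1 = (ρ y).1 ∨ T.Adj (ρ x).1 (ρ y).1) := by
    intro x y
    rw [← quandleOp_eq_iff S x y, ← quandleOp_eq_iff T (ρ x) (ρ y), ← hρhom,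
      hρinj.eq_iff]
  -- first coordinates of ρ(v, b) agree for both b
  have hV : ∀ v : ℕ, (ρ (v, true)).1 = (ρ (v, false)).1 := by
    intro v
    obtain ⟨w, hw, hadj⟩ := hSnn v
    have hadj' : ¬ S.Adj w v := fun h => hadj h.symm
    have h1 : quandleOp S (w, false) (v, false) = (v, true) := by
      simp [quandleOp, hw, hadj']
    have h2 := hρhom (w, false) (v, false)
    rw [h1] at h2
    rw [h2]
    unfold quandleOp
    split <;> rfl
  have hinj : Function.Injective (fun v : ℕ => (ρ (v, false)).1) := by
    intro u v huv
    simp only at huv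
    by_contra hne
    have hab : ρ (u, false) ≠ ρ (u, true) := fun h => by simpa using hρinj h
    have hac : ρ (u, false) ≠ ρ (v, false) := fun h => by
      have := hρinj h; exact hne (by simpa using this)
    have hbc : ρ (u, true) ≠ ρ (v, false) := fun h => by
      have := hρinj h; simp at this
    have e1 : (ρ (u, false)).1 = (ρ (u, true)).1 := (hV u).symm
    have e2 : (ρ (u, false)).1 = (ρ (v, false)).1 := huv
    have b1 : (ρ (u, false)).2 ≠ (ρ (u, true)).2 := fun h => hab (Prod.ext e1 h)
    have b2 : (ρ (u, false)).2 ≠ (ρ (v, false)).2 := fun h => hac (Prod.ext e2 h)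
    have b3 : (ρ (u, true)).2 ≠ (ρ (v, false)).2 := fun h =>
      hbc (Prod.ext (e1.symm.trans e2) h)
    revert b1 b2 b3
    cases (ρ (u, false)).2 <;> cases (ρ (u, true)).2 <;> cases (ρ (v, false)).2 <;> simp
  refine ⟨hinj, fun u v => ?_⟩
  have k := key (u, false) (v, false)
  simp only at k
  constructor
  · intro h
    rcases k.mp (Or.inr h) with h' | h'
    · exact absurd (hinj h') h.ne
    · exact h'
  · intro h
    rcases k.mpr (Or.inr h) with h' | h'
    · subst h'; exact absurd h (T.irrefl)
    · exact h'
end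

section
/- For combinatorial trees S and T in which every vertex has a non-neighbor: S embeds into T as a graph if and only if Q_S embeds into Q_T as a quandle. -/
open Function

namespace SimpleGraph

variable {V W : Type*} {G : SimpleGraph V} {G' : SimpleGraph W}

lemma IsAcyclic.eq_or_eq_of_adj (hG : G.IsAcyclic) {a b c : V} (hab : G.Adj a b)
    (hca : c = a ∨ G.Adj c a) (hcb : c = b ∨ G.Adj c b) : c = a ∨ c = b := by
  rcases hca with rfl | hca
  · exact Or.inl rfl
  rcases hcb with rfl | hcb
  · exact Or.inr rfl
  refine (hG (.cons hab (.cons hcb.symm (.cons hca .nil))) ?_).elim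
  simp [Walk.isCycle_def, Walk.isTrail_def, hab.ne', hca.ne, hca.ne', hcb.ne']

lemma Preconnected.forall_of_forall_adj (hG : G.Preconnected) {P : V → Prop}
    (hstep : ∀ v w, G.Adj v w → P v → P w) {u : V} (hu : P u) (v : V) : P v := by
  have huv := (reachable_iff_reflTransGen u v).1 (hG u v)
  induction huv with
  | refl => exact hu
  | tail _ hvw ih => exact hstep _ _ hvw ih

lemma adj_iff_of_eq_or_adj_iff {f : V → W} (hf : Injective f) {u v : V}
    (h : u = v ∨ G.Adj u v ↔ f u = f v ∨ G'.Adj (f u) (f v)) : G.Adj u v ↔ G'.Adj (f u) (f v) := by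
  by_cases huv : u = v
  · subst huv
    simp
  · simpa [huv, hf.ne huv] using h

end SimpleGraph

lemma Prod.eq_or_eq_of_fst_eq {α : Type*} {p q r : α × Bool} (hq : q.1 = p.1) (hr : r.1 = p.1)
    (hqr : q ≠ r) : p = q ∨ p = r := by
  obtain ⟨a, i⟩ := p
  obtain ⟨b, j⟩ := q
  obtain ⟨c, k⟩ := r
  dsimp only at hq hr
  subst hq hr
  cases i <;> cases j <;> cases k <;> simp_all

lemma Function.Injective.eq_or_eq_of_fst_eq {α β : Type*} {ρ : α × Bool → β × Bool}
    (hρ : Injective ρ) {p q r : α × Bool} (hq : (ρ q).1 = (ρ p).1) (hr : (ρ r).1 = (ρ p).1)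
    (hqr : q ≠ r) : p = q ∨ p = r :=
  (Prod.eq_or_eq_of_fst_eq hq hr (hρ.ne hqr)).imp (hρ ·) (hρ ·)

section quandleOp

variable {S T : SimpleGraph ℕ}

lemma quandleOp_eq_right_iff {x y : ℕ × Bool} :
    quandleOp T x y = y ↔ x.1 = y.1 ∨ T.Adj x.1 y.1 := by
  unfold quandleOp
  split_ifs with h <;> simp [h, Prod.ext_iff]

lemma quandleOp_prodMap (f : S ↪g T) (x y : ℕ × Bool) :
    Prod.map f id (quandleOp S x y) = quandleOp T (Prod.map f id x) (Prod.map f id y) := by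
  by_cases hxy : x.1 = y.1 ∨ S.Adj x.1 y.1 <;> simp [quandleOp, hxy]

lemma fst_eq_or_adj_iff_of_injective_quandleOp {ρ : ℕ × Bool → ℕ × Bool} (hinj : Injective ρ)
    (hρ : ∀ x y, ρ (quandleOp S x y) = quandleOp T (ρ x) (ρ y)) (x y : ℕ × Bool) :
    x.1 = y.1 ∨ S.Adj x.1 y.1 ↔ (ρ x).1 = (ρ y).1 ∨ T.Adj (ρ x).1 (ρ y).1 := by
  rw [← quandleOp_eq_right_iff, ← quandleOp_eq_right_iff, ← hρ, hinj.eq_iff]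

end quandleOp

section column

variable {S T : SimpleGraph ℕ} {ρ : ℕ × Bool → ℕ × Bool} (hinj : Injective ρ)
  (hclose : ∀ x y : ℕ × Bool,
    x.1 = y.1 ∨ S.Adj x.1 y.1 ↔ (ρ x).1 = (ρ y).1 ∨ T.Adj (ρ x).1 (ρ y).1)
include hinj hclose

lemma split_column_of_adj (hT : T.IsAcyclic) {w x : ℕ} (hwx : S.Adj w x)
    (hw : (ρ (w, false)).1 ≠ (ρ (w, true)).1) :
    (ρ (x, false)).1 ≠ (ρ (x, true)).1 ∧
      ∀ i, (ρ (x, i)).1 = (ρ (w, false)).1 ∨ (ρ (x, i)).1 = (ρ (w, true)).1 := by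
  have hab : T.Adj (ρ (w, false)).1 (ρ (w, true)).1 :=
    ((hclose (w, false) (w, true)).1 (Or.inl rfl)).resolve_left hw
  have hmem : ∀ i, (ρ (x, i)).1 = (ρ (w, false)).1 ∨ (ρ (x, i)).1 = (ρ (w, true)).1 := fun i =>
    hT.eq_or_eq_of_adj hab ((hclose (x, i) (w, false)).1 (Or.inr hwx.symm))
      ((hclose (x, i) (w, true)).1 (Or.inr hwx.symm))
  refine ⟨fun hx => ?_, hmem⟩
  obtain ⟨j, hj⟩ : ∃ j, (ρ (x, false)).1 = (ρ (w, j)).1 :=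
    (hmem false).elim (⟨false, ·⟩) (⟨true, ·⟩)
  rcases hinj.eq_or_eq_of_fst_eq hj (hx.symm.trans hj) (by simp) with h | h <;>
    exact hwx.ne (congrArg Prod.fst h)

lemma fst_apply_false_eq_fst_apply_true (hS : S.Preconnected) (hT : T.IsAcyclic) (u : ℕ) :
    (ρ (u, false)).1 = (ρ (u, true)).1 := by
  by_contra hu
  set s : Set ℕ := {(ρ (u, false)).1, (ρ (u, true)).1}
  have hsplit : ∀ v, (ρ (v, false)).1 ≠ (ρ (v, true)).1 ∧ ∀ i, (ρ (v, i)).1 ∈ s := by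
    refine hS.forall_of_forall_adj (fun w x hwx ⟨hw, hws⟩ => ?_) ⟨hu, by simp [s, Bool.forall_bool]⟩
    obtain ⟨hx, hxw⟩ := split_column_of_adj hinj hclose hT hwx hw
    exact ⟨hx, fun i => (hxw i).elim (· ▸ hws false) (· ▸ hws true)⟩
  have hinf : (s ×ˢ Set.univ : Set (ℕ × Bool)).Infinite :=
    Set.infinite_of_injective_forall_mem hinj fun x => ⟨(hsplit x.1).2 x.2, trivial⟩
  exact hinf ((Set.toFinite s).prod Set.finite_univ)

lemma nonempty_embedding_of_fst_eq_or_adj_iff (hS : S.Preconnected) (hT : T.IsAcyclic) :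
    Nonempty (S ↪g T) := by
  have hcol := fst_apply_false_eq_fst_apply_true hinj hclose hS hT
  have hf : Injective fun u => (ρ (u, false)).1 := fun u v huv => by
    rcases hinj.eq_or_eq_of_fst_eq (hcol u).symm huv.symm (by simp) with h | h
    · simp at h
    · simpa using h
  exact ⟨⟨⟨_, hf⟩, fun {u v} => (SimpleGraph.adj_iff_of_eq_or_adj_iff hf
    (hclose (u, false) (v, false))).symm⟩⟩

end column

theorem graph_embeds_iff_quandle_embeds_general (S T : SimpleGraph ℕ)
    (hSconn : S.Connected)
    (hTacyc : T.IsAcyclic) :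
    (∃ f : ℕ → ℕ, Function.Injective f ∧
        ∀ u v : ℕ, S.Adj u v ↔ T.Adj (f u) (f v)) ↔
    (∃ ρ : ℕ × Bool → ℕ × Bool, Function.Injective ρ ∧
        ∀ x y : ℕ × Bool, ρ (quandleOp S x y) = quandleOp T (ρ x) (ρ y)) := by
  constructor
  · rintro ⟨f, hf, hadj⟩
    let e : S ↪g T := ⟨⟨f, hf⟩, (hadj _ _).symm⟩
    exact ⟨Prod.map e id, hf.prodMap injective_id, quandleOp_prodMap e⟩
  · rintro ⟨ρ, hinj, hρ⟩
    obtain ⟨e⟩ := nonempty_embedding_of_fst_eq_or_adj_iff hinj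
      (fst_eq_or_adj_iff_of_injective_quandleOp hinj hρ) hSconn.preconnected hTacyc
    exact ⟨e, e.injective, fun u v => e.map_adj_iff.symm⟩

theorem graph_embeds_iff_quandle_embeds (S T : SimpleGraph ℕ)
    (hSconn : S.Connected) (hSacyc : S.IsAcyclic)
    (hTconn : T.Connected) (hTacyc : T.IsAcyclic)
    (hSnn : ∀ x : ℕ, ∃ y : ℕ, y ≠ x ∧ ¬ S.Adj x y)
    (hTnn : ∀ x : ℕ, ∃ y : ℕ, y ≠ x ∧ ¬ T.Adj x y) :
    (∃ f : ℕ → ℕ, Function.Injective f ∧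
        ∀ u v : ℕ, S.Adj u v ↔ T.Adj (f u) (f v)) ↔
    (∃ ρ : ℕ × Bool → ℕ × Bool, Function.Injective ρ ∧
        ∀ x y : ℕ × Bool, ρ (quandleOp S x y) = quandleOp T (ρ x) (ρ y)) :=
  graph_embeds_iff_quandle_embeds_general S T hSconn hTacyc
end

section
/- Let T be a combinatorial tree in which every vertex has a non-neighbor, and suppose T is rigid (has no nontrivial graph automorphism). Then every quandle automorphism of Q_T is of the form I_A for some A ⊆ ℕ, where I_A(v,j)=(v,j) if v∈A and (v,1−j) otherwise. -/
open Classical in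
/-- The involution `I_A` on `ℕ × Bool`. -/
noncomputable def invA (A : Set ℕ) (x : ℕ × Bool) : ℕ × Bool :=
  if x.1 ∈ A then x else (x.1, !x.2)

/-- In a walk starting in `{u,v}` and ending outside, some vertex outside `{u,v}` is
adjacent to `u` or `v`. -/
lemma walk_aux (T : SimpleGraph ℕ) (u v : ℕ) :
    ∀ {a c : ℕ} (_ : T.Walk a c), (a = u ∨ a = v) → c ≠ u → c ≠ v →
      ∃ w, w ≠ u ∧ w ≠ v ∧ (T.Adj u w ∨ T.Adj v w) := by
  intro a c p
  induction p with
  | nil =>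
    intro ha hc1 hc2
    rcases ha with rfl | rfl
    · exact absurd rfl hc1
    · exact absurd rfl hc2
  | @cons a b c h q ih =>
    intro ha hc1 hc2
    by_cases hb : b = u ∨ b = v
    · exact ih hb hc1 hc2
    · push_neg at hb
      refine ⟨b, hb.1, hb.2, ?_⟩
      rcases ha with rfl | rfl
      · exact Or.inl h
      · exact Or.inr h

lemma pair_fst_eq (x y : ℕ × Bool) (h : x.1 = y.1) : x = y ∨ x = (y.1, !y.2) := by
  obtain ⟨x1, x2⟩ := x
  obtain ⟨y1, y2⟩ := y
  simp only at h
  subst h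
  cases x2 <;> cases y2 <;> simp

theorem automorphism_of_rigid_is_invA (T : SimpleGraph ℕ)
    (hTconn : T.Connected) (hTacyc : T.IsAcyclic)
    (hTnn : ∀ x : ℕ, ∃ y : ℕ, y ≠ x ∧ ¬ T.Adj x y)
    (hrigid : ∀ h : ℕ → ℕ, Function.Bijective h →
      (∀ u v : ℕ, T.Adj u v ↔ T.Adj (h u) (h v)) → h = id)
    (ρ : ℕ × Bool → ℕ × Bool) (hρbij : Function.Bijective ρ)
    (hρhom : ∀ x y : ℕ × Bool, ρ (quandleOp T x y) = quandleOp T (ρ x) (ρ y)) :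
    ∃ A : Set ℕ, ρ = invA A := by
  classical
  -- basic characterization of the quandle operation fixing points
  have h1 : ∀ a b : ℕ × Bool, quandleOp T a b = b ↔ (a.1 = b.1 ∨ T.Adj a.1 b.1) := by
    intro a b
    unfold quandleOp
    split
    · next hh => simp [hh]
    · next hh =>
        simp only [hh, iff_false]
        intro h
        have := congrArg Prod.snd h
        simp at this
  -- the "same or adjacent" relation is preserved by ρ
  have hcond : ∀ x y : ℕ × Bool,
      (x.1 = y.1 ∨ T.Adj x.1 y.1) ↔ ((ρ x).1 = (ρ y).1 ∨ T.Adj (ρ x).1 (ρ y).1) := by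
    intro x y
    constructor
    · intro h
      have h2 : quandleOp T x y = y := (h1 x y).2 h
      have h3 := congrArg ρ h2
      rw [hρhom] at h3
      exact (h1 _ _).1 h3
    · intro h
      have h2 : quandleOp T (ρ x) (ρ y) = ρ y := (h1 _ _).2 h
      rw [← hρhom] at h2
      exact (h1 x y).1 (hρbij.1 h2)
  -- triangle-free
  have htri : ∀ a b c : ℕ, T.Adj a b → T.Adj b c → ¬ T.Adj a c := by
    intro a b c hab hbc hac
    have hpu := (SimpleGraph.isAcyclic_iff_path_unique).1 hTacyc
    have hp2 : (SimpleGraph.Walk.cons hab (SimpleGraph.Walk.cons hbc SimpleGraph.Walk.nil)).IsPath := by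
      simp [SimpleGraph.Walk.isPath_def, hab.ne, hbc.ne, hac.ne]
    have := hpu (SimpleGraph.Path.singleton hac) ⟨_, hp2⟩
    have hlen := congrArg (fun p : T.Path a c => p.val.length) this
    simp [SimpleGraph.Path.singleton] at hlen
  -- distinguisher for adjacent vertices
  have hdist : ∀ a b : ℕ, T.Adj a b →
      ∃ w, w ≠ a ∧ w ≠ b ∧ (T.Adj a w ∨ T.Adj b w) := by
    intro a b hab
    set z := max a b + 1 with hz
    have hza : z ≠ a := by omega
    have hzb : z ≠ b := by omega
    exact walk_aux T a b ((hTconn a z).some) (Or.inl rfl) hza hzb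
  -- the first coordinate of ρ does not depend on the Bool coordinate
  have hfst : ∀ v : ℕ, (ρ (v, false)).1 = (ρ (v, true)).1 := by
    intro v
    by_contra hne
    set a := (ρ (v, false)).1 with ha
    set b := (ρ (v, true)).1 with hb
    have hadj : T.Adj a b := by
      have := (hcond (v, false) (v, true)).1 (Or.inl rfl)
      rcases this with h | h
      · exact absurd h hne
      · exact h
    obtain ⟨w, hwa, hwb, hw⟩ := hdist a b hadj
    obtain ⟨z, hzw⟩ := hρbij.2 (w, false)
    have hc1 := hcond z (v, false)
    have hc2 := hcond z (v, true)
    rw [hzw] at hc1 hc2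
    rcases hw with haw | hbw
    · have hl : z.1 = v ∨ T.Adj z.1 v := hc1.2 (Or.inr (by simpa using haw.symm))
      have hr := hc2.1 hl
      rcases hr with h | h
      · exact hwb h
      · exact htri a w b haw (by simpa using h) hadj
    · have hl : z.1 = v ∨ T.Adj z.1 v := hc2.2 (Or.inr (by simpa using hbw.symm))
      have hr := hc1.1 hl
      rcases hr with h | h
      · exact hwa h
      · exact htri b w a hbw (by simpa using h) hadj.symm
  set h : ℕ → ℕ := fun v => (ρ (v, false)).1 with hdef
  have hfst' : ∀ x : ℕ × Bool, (ρ x).1 = h x.1 := by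
    intro x
    obtain ⟨v, j⟩ := x
    cases j
    · rfl
    · exact (hfst v).symm
  -- h is injective
  have hinj : Function.Injective h := by
    intro u v huv
    by_contra hne
    have e1 : (ρ (u, false)).1 = (ρ (v, false)).1 := by rw [hfst', hfst', huv]
    have e2 : (ρ (u, true)).1 = (ρ (v, false)).1 := by rw [hfst', hfst', huv]
    rcases pair_fst_eq _ _ e1 with h1' | h1'
    · have := hρbij.1 h1'
      exact hne (congrArg Prod.fst this)
    · rcases pair_fst_eq _ _ e2 with h2' | h2'
      · have := hρbij.1 h2'
        simpa using congrArg Prod.snd this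
      · have : ρ (u, false) = ρ (u, true) := by rw [h1', h2']
        have := hρbij.1 this
        simpa using congrArg Prod.snd this
  -- h is surjective
  have hsurj : Function.Surjective h := by
    intro w
    obtain ⟨z, hz⟩ := hρbij.2 (w, false)
    refine ⟨z.1, ?_⟩
    have := hfst' z
    rw [hz] at this
    exact this.symm
  -- h preserves adjacency
  have hadj : ∀ u v : ℕ, T.Adj u v ↔ T.Adj (h u) (h v) := by
    intro u v
    have hc := hcond (u, false) (v, false)
    constructor
    · intro huv
      rcases hc.1 (Or.inr huv) with he | hA
      · exact absurd (hinj he) huv.ne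
      · exact hA
    · intro hA
      rcases hc.2 (Or.inr hA) with he | hB
      · subst he
        exact absurd rfl hA.ne
      · exact hB
  have hid : h = id := hrigid h ⟨hinj, hsurj⟩ hadj
  have hfix : ∀ x : ℕ × Bool, (ρ x).1 = x.1 := by
    intro x
    rw [hfst' x, hid]
    rfl
  refine ⟨{v | ρ (v, false) = (v, false)}, ?_⟩
  funext x
  obtain ⟨v, j⟩ := x
  have hF := hfix (v, false)
  have hT := hfix (v, true)
  have hneq : ρ (v, false) ≠ ρ (v, true) := fun hc => by
    simpa using congrArg Prod.snd (hρbij.1 hc)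
  by_cases hv : ρ (v, false) = (v, false)
  · have hTt : ρ (v, true) = (v, true) := by
      rcases pair_fst_eq (ρ (v, true)) (v, false) hT with h' | h'
      · exact absurd (hv.trans h'.symm) hneq
      · simpa using h'
    cases j <;> simp [invA, hv, hTt, Set.mem_setOf_eq]
  · have hFt : ρ (v, false) = (v, true) := by
      rcases pair_fst_eq (ρ (v, false)) (v, false) hF with h' | h'
      · exact absurd h' hv
      · simpa using h'
    have hTt : ρ (v, true) = (v, false) := by
      rcases pair_fst_eq (ρ (v, true)) (v, false) hT with h' | h'
      · exact h'
      · exact absurd (hFt.trans (by simpa using h'.symm)) hneq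
    cases j <;> simp [invA, hv, hFt, hTt, Set.mem_setOf_eq]
end

section
/- Let T be a combinatorial tree in which every vertex has a non-neighbor. Every quandle automorphism ρ of Q_T has the form ρ(v,j) = I_A(h(v),j) for some graph automorphism h of T and some subset A ⊆ ℕ, where I_A(v,j)=(v,j) if v∈A and (v,1−j) otherwise. -/
/-- In a connected acyclic graph on `ℕ`, equal closed neighborhoods imply equal vertices. -/
lemma closed_nbhd_eq (T : SimpleGraph ℕ) (hTconn : T.Connected) (hTacyc : T.IsAcyclic)
    (a b : ℕ) (hab : ∀ w, (w = a ∨ T.Adj w a) ↔ (w = b ∨ T.Adj w b)) : a = b := by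
  by_contra hne
  have hadj : T.Adj a b := by
    rcases (hab a).mp (Or.inl rfl) with h | h
    · exact absurd h hne
    · exact h
  have hpu := SimpleGraph.isAcyclic_iff_path_unique.mp hTacyc
  have hnbr_a : ∀ c, T.Adj c a → c = b := by
    intro c hc
    rcases (hab c).mp (Or.inr hc) with h | h
    · exact h
    · exfalso
      have hne_ca : a ≠ c := hc.ne'
      have hne_cb : a ≠ b := hne
      have hp2 : (SimpleGraph.Walk.cons hc.symm
          (SimpleGraph.Walk.cons h SimpleGraph.Walk.nil) : T.Walk a b).IsPath := by
        simp [SimpleGraph.Walk.cons_isPath_iff, hne_ca, hne_cb, h.ne]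
      have heq := hpu (SimpleGraph.Path.singleton hadj) ⟨_, hp2⟩
      have := congrArg (fun p : T.Path a b => p.1.length) heq
      simp [SimpleGraph.Path.singleton] at this
  have hnbr_b : ∀ c, T.Adj c b → c = a := by
    intro c hc
    rcases (hab c).mpr (Or.inr hc) with h | h
    · exact h
    · exfalso
      have hp2 : (SimpleGraph.Walk.cons hc.symm
          (SimpleGraph.Walk.cons h SimpleGraph.Walk.nil) : T.Walk b a).IsPath := by
        simp [SimpleGraph.Walk.cons_isPath_iff, hc.ne', (Ne.symm hne), h.ne]
      have heq := hpu (SimpleGraph.Path.singleton hadj.symm) ⟨_, hp2⟩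
      have := congrArg (fun p : T.Path b a => p.1.length) heq
      simp [SimpleGraph.Path.singleton] at this
  have hwalk : ∀ (x y : ℕ) (p : T.Walk x y), y = a → x = a ∨ x = b := by
    intro x y p
    induction p with
    | nil => exact fun h => Or.inl h
    | cons h p ih =>
      intro hy
      rcases ih hy with h1 | h1
      · subst h1; exact Or.inr (hnbr_a _ h)
      · subst h1; exact Or.inl (hnbr_b _ h)
  have hd := hwalk (a + b + 1) a (hTconn.preconnected (a + b + 1) a).some rfl
  rcases hd with h | h <;> omega

theorem automorphism_from_graph_automorphism (T : SimpleGraph ℕ)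
    (hTconn : T.Connected) (hTacyc : T.IsAcyclic)
    (hTnn : ∀ x : ℕ, ∃ y : ℕ, y ≠ x ∧ ¬ T.Adj x y)
    (ρ : ℕ × Bool → ℕ × Bool) (hρbij : Function.Bijective ρ)
    (hρhom : ∀ x y : ℕ × Bool, ρ (quandleOp T x y) = quandleOp T (ρ x) (ρ y)) :
    ∃ (h : ℕ → ℕ) (A : Set ℕ), Function.Bijective h ∧
      (∀ u v : ℕ, T.Adj u v ↔ T.Adj (h u) (h v)) ∧
      ∀ (v : ℕ) (j : Bool), ρ (v, j) = invA A (h v, j) := by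
  classical
  obtain ⟨hinj, hsurj⟩ := hρbij
  have key : ∀ x y : ℕ × Bool,
      (x.1 = y.1 ∨ T.Adj x.1 y.1) ↔ ((ρ x).1 = (ρ y).1 ∨ T.Adj (ρ x).1 (ρ y).1) := by
    intro x y
    constructor
    · intro hα
      by_contra hn
      have h1 := hρhom x y
      rw [quandleOp, if_pos hα, quandleOp, if_neg hn] at h1
      have h2 : (ρ y).2 = !(ρ y).2 := congrArg Prod.snd h1
      simp at h2
    · intro hα
      by_contra hn
      have h1 := hρhom x y
      rw [quandleOp, if_neg hn, quandleOp, if_pos hα] at h1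
      have h2 := hinj h1
      have h3 := congrArg Prod.snd h2
      simp at h3
  have same_fst : ∀ v, (ρ (v, true)).1 = (ρ (v, false)).1 := by
    intro v
    apply closed_nbhd_eq T hTconn hTacyc
    intro w
    obtain ⟨x, hx⟩ := hsurj (w, false)
    have k1 := key x (v, true)
    have k2 := key x (v, false)
    rw [hx] at k1 k2
    exact k1.symm.trans k2
  have snd_ne : ∀ v, (ρ (v, true)).2 = !(ρ (v, false)).2 := by
    intro v
    have hne : (ρ (v, true)).2 ≠ (ρ (v, false)).2 := by
      intro h
      have h1 : ρ (v, true) = ρ (v, false) := Prod.ext (same_fst v) h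
      have h2 := hinj h1
      simp at h2
    cases h2 : (ρ (v, false)).2 <;> cases h1 : (ρ (v, true)).2 <;> simp_all
  have hinjh : Function.Injective (fun v => (ρ (v, false)).1) := by
    intro u v huv
    by_contra hne
    by_cases hε : (ρ (u, false)).2 = (ρ (v, false)).2
    · have h1 : ρ (u, false) = ρ (v, false) := Prod.ext huv hε
      exact hne (congrArg Prod.fst (hinj h1))
    · have h1 : (ρ (u, false)).2 = (ρ (v, true)).2 := by
        rw [snd_ne v]
        cases h2 : (ρ (v, false)).2 <;> cases h3 : (ρ (u, false)).2 <;> simp_all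
      have h2 : (ρ (u, false)).1 = (ρ (v, true)).1 := by
        rw [same_fst v]; exact huv
      have h3 := hinj (Prod.ext h2 h1)
      simp at h3
  have hsurjh : Function.Surjective (fun v => (ρ (v, false)).1) := by
    intro w
    obtain ⟨⟨v, j⟩, hx⟩ := hsurj (w, false)
    cases j
    · exact ⟨v, congrArg Prod.fst hx⟩
    · exact ⟨v, (same_fst v).symm.trans (congrArg Prod.fst hx)⟩
  have adj_iff : ∀ u v, T.Adj u v ↔ T.Adj ((ρ (u, false)).1) ((ρ (v, false)).1) := by
    intro u v
    have k := key (u, false) (v, false)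
    constructor
    · intro hA
      rcases k.mp (Or.inr hA) with h | h
      · exact absurd (hinjh h) hA.ne
      · exact h
    · intro hA
      rcases k.mpr (Or.inr hA) with h | h
      · exact absurd (congrArg (fun v => (ρ (v, false)).1) h) hA.ne
      · exact h
  refine ⟨fun v => (ρ (v, false)).1,
    {w | ∃ u, (ρ (u, false)).1 = w ∧ (ρ (u, false)).2 = false},
    ⟨hinjh, hsurjh⟩, adj_iff, ?_⟩
  intro v j
  have hmem : ((ρ (v, false)).1 ∈
      {w | ∃ u, (ρ (u, false)).1 = w ∧ (ρ (u, false)).2 = false}) ↔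
      (ρ (v, false)).2 = false := by
    constructor
    · rintro ⟨u, h1, h2⟩
      rw [← hinjh h1]; exact h2
    · intro h; exact ⟨v, rfl, h⟩
  cases j
  · rw [invA]
    by_cases hc : (ρ (v, false)).2 = false
    · rw [if_pos (hmem.mpr hc)]
      exact Prod.ext rfl hc
    · rw [if_neg (fun hmm => hc (hmem.mp hmm))]
      exact Prod.ext rfl (Bool.ne_false_iff.mp hc)
  · rw [invA]
    by_cases hc : (ρ (v, false)).2 = false
    · rw [if_pos (hmem.mpr hc)]
      refine Prod.ext (same_fst v) ?_
      rw [snd_ne v, hc]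
      rfl
    · rw [if_neg (fun hmm => hc (hmem.mp hmm))]
      refine Prod.ext (same_fst v) ?_
      rw [snd_ne v, Bool.ne_false_iff.mp hc]
end

section
/- Let K be a field of characteristic different from 2, t transcendental over K, U₁,…,Uₙ pairwise coprime nonconstant squarefree polynomials in K[t], ϑᵢ² = Uᵢ, F₀ = K(t), and Fᵢ = K(t,ϑ₁,…,ϑᵢ). Then for each 1 ≤ i ≤ n: if η ∈ Fᵢ satisfies η² ∈ F₀, then there exist k ∈ F₀ and J ⊆ {1,…,i} with η = k·∏_{j∈J} ϑⱼ. -/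
/-!
Induction along the tower. `ϑᵢ ∉ Fᵢ₋₁`: otherwise `ϑᵢ = k ∏_{j ∈ J} ϑⱼ` with `k ∈ K(t)` and
`J ⊆ {j < i}`, and squaring and clearing denominators gives `Uᵢ q² = p² ∏_{j ∈ J} Uⱼ` in `K[t]`,
which a descent rules out because `Uᵢ` is squarefree, nonconstant and coprime to the `Uⱼ`.
Hence `Fᵢ = Fᵢ₋₁(ϑᵢ)` is quadratic, `η = a + bϑᵢ` with `a, b ∈ Fᵢ₋₁`, and `η² ∈ F₀` forces
`2abϑᵢ ∈ Fᵢ₋₁`, i.e. `a = 0` or `b = 0`; the square of the surviving coefficient lies in `F₀`.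
-/

open Polynomial

theorem Squarefree.mul_sq_ne_sq_mul {R : Type*} [CommRing R] [IsDomain R] [WfDvdMonoid R]
    [DecompositionMonoid R] {u v : R} (hu : Squarefree u) (hunit : ¬IsUnit u)
    (huv : IsCoprime u v) {q : R} (hq : q ≠ 0) (p : R) : u * q ^ 2 ≠ p ^ 2 * v := by
  induction q using (wellFounded_dvdNotUnit (α := R)).induction generalizing p with
  | _ q ih =>
  intro h
  obtain ⟨s, rfl⟩ : u ∣ p :=
    (hu.dvd_pow_iff_dvd two_ne_zero).1 (huv.dvd_of_dvd_mul_right ⟨q ^ 2, h.symm⟩)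
  have hq2 : q ^ 2 = u * (s ^ 2 * v) := mul_left_cancel₀ hu.ne_zero (by rw [h]; ring)
  obtain ⟨q', rfl⟩ : u ∣ q := (hu.dvd_pow_iff_dvd two_ne_zero).1 ⟨_, hq2⟩
  have hq' : q' ≠ 0 := right_ne_zero_of_mul hq
  refine ih q' ⟨hq', u, hunit, mul_comm _ _⟩ hq' s (mul_left_cancel₀ hu.ne_zero ?_)
  linear_combination hq2

namespace IntermediateField

theorem exists_eq_add_mul_of_mem_adjoin_of_sq_eq {E L : Type*} [Field E] [Field L]
    [Algebra E L] {c : L} {d : E} (hc : c ^ 2 = algebraMap E L d) {x : L}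
    (hx : x ∈ adjoin E {c}) :
    ∃ a b : E, x = algebraMap E L a + algebraMap E L b * c := by
  set g : E[X] := X ^ 2 - C d
  have hg : g.Monic := monic_X_pow_sub_C d two_ne_zero
  have hgc : aeval c g = 0 := by simp [g, hc]
  rw [← mem_toSubalgebra,
    adjoin_simple_toSubalgebra_of_isAlgebraic ⟨g, hg.ne_zero, hgc⟩,
    Algebra.adjoin_singleton_eq_range_aeval] at hx
  obtain ⟨p, rfl⟩ := hx
  have hg2 : g.natDegree = 2 := natDegree_X_pow_sub_C
  have hdeg : (p %ₘ g).natDegree ≤ 1 := by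
    have := natDegree_modByMonic_lt p hg (fun h => by simp [h] at hg2)
    omega
  refine ⟨(p %ₘ g).coeff 0, (p %ₘ g).coeff 1, ?_⟩
  change aeval c p = _
  rw [← aeval_modByMonic_eq_self_of_root hgc, eq_X_add_C_of_natDegree_le_one hdeg]
  simp [add_comm]

variable {K L : Type*} [Field K] [Field L] [Algebra K L]

theorem exists_eq_or_eq_mul_of_sq_mem {E : IntermediateField K L} (h2 : (2 : L) ≠ 0)
    {c : L} (hc : c ^ 2 ∈ E) (hcE : c ∉ E) {η : L} (hη : η ∈ adjoin E {c}) (hη2 : η ^ 2 ∈ E) :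
    ∃ a ∈ E, η = a ∨ η = a * c := by
  obtain ⟨⟨a, ha⟩, ⟨b, hb⟩, rfl⟩ :=
    exists_eq_add_mul_of_mem_adjoin_of_sq_eq (d := ⟨c ^ 2, hc⟩) rfl hη
  simp only [algebraMap_apply] at hη2 ⊢
  have habc : a * b * c ∈ E := by
    rw [show a * b * c = 2⁻¹ * ((a + b * c) ^ 2 - a ^ 2 - b ^ 2 * c ^ 2) by field_simp; ring]
    exact mul_mem (inv_mem (ofNat_mem E 2))
      (sub_mem (sub_mem hη2 (pow_mem ha 2)) (mul_mem (pow_mem hb 2) hc))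
  rcases eq_or_ne a 0 with rfl | ha0
  · exact ⟨b, hb, Or.inr (zero_add _)⟩
  rcases eq_or_ne b 0 with rfl | hb0
  · exact ⟨a, ha, Or.inl (by ring)⟩
  refine absurd ?_ hcE
  rw [show c = (a * b)⁻¹ * (a * b * c) by field_simp]
  exact mul_mem (inv_mem (mul_mem ha hb)) habc

end IntermediateField

open IntermediateField

theorem Transcendental.aeval_ne_sq_mul_aeval {K L : Type*} [Field K] [Field L] [Algebra K L]
    {t : L} (ht : Transcendental K t) {u v : K[X]}
    (hu : Squarefree u) (hunit : ¬IsUnit u) (huv : IsCoprime u v) {k : L} (hk : k ∈ K⟮t⟯) :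
    Polynomial.aeval t u ≠ k ^ 2 * Polynomial.aeval t v := by
  have hinj : Function.Injective (Polynomial.aeval (R := K) t) :=
    transcendental_iff_injective.mp ht
  obtain ⟨p, q, rfl⟩ := (mem_adjoin_simple_iff K _).mp hk
  rcases eq_or_ne q 0 with rfl | hq
  · simpa using hinj.ne hu.ne_zero
  have hqt : Polynomial.aeval t q ≠ 0 := (hinj.ne_iff' (map_zero _)).mpr hq
  intro h
  refine hu.mul_sq_ne_sq_mul hunit huv hq p (hinj ?_)
  simp only [map_mul, map_pow, h]
  field_simp

section Tower

variable (K : Type*) {L : Type*} [Field K] [Field L] [Algebra K L] {n : ℕ} (t : L) (ϑ : Fin n → L)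

def tower (m : ℕ) : IntermediateField K L :=
  adjoin K ({t} ∪ ϑ '' {j | (j : ℕ) < m})

def HasMonomialSqrts (m : ℕ) : Prop :=
  ∀ η ∈ tower K t ϑ m, η ^ 2 ∈ tower K t ϑ 0 →
    ∃ k ∈ tower K t ϑ 0, ∃ J : Finset (Fin n), (∀ j ∈ J, (j : ℕ) < m) ∧ η = k * ∏ j ∈ J, ϑ j

variable {t ϑ}

theorem tower_zero : tower K t ϑ 0 = K⟮t⟯ := by
  simp [tower]

theorem tower_mono : Monotone (tower K t ϑ) := fun _ _ hab =>
  adjoin.mono _ _ _ <| Set.union_subset_union_right _ <| Set.image_mono fun _ hj => hj.trans_le hab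

theorem self_mem_tower (m : ℕ) : t ∈ tower K t ϑ m :=
  subset_adjoin K _ (Or.inl rfl)

theorem aeval_mem_tower (p : K[X]) (m : ℕ) : aeval t p ∈ tower K t ϑ m :=
  Algebra.adjoin_le (Set.singleton_subset_iff.mpr (self_mem_tower K m))
    (aeval_mem_adjoin_singleton K t)

theorem mem_tower_of_lt {j : Fin n} {m : ℕ} (hj : (j : ℕ) < m) : ϑ j ∈ tower K t ϑ m :=
  subset_adjoin K _ (Or.inr ⟨j, hj, rfl⟩)

theorem tower_succ_le (i : Fin n) :
    tower K t ϑ (i + 1) ≤ (adjoin (tower K t ϑ i) {ϑ i}).restrictScalars K := by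
  refine adjoin_le_iff.mpr ?_
  rintro _ (hx | ⟨j, hj, rfl⟩)
  · rw [Set.mem_singleton_iff.mp hx]
    exact (adjoin (tower K t ϑ i) {ϑ i}).algebraMap_mem ⟨t, self_mem_tower K i⟩
  rcases Nat.lt_succ_iff_lt_or_eq.mp hj with hj | hj
  · exact (adjoin (tower K t ϑ i) {ϑ i}).algebraMap_mem ⟨ϑ j, mem_tower_of_lt K hj⟩
  · rw [Fin.ext hj, SetLike.mem_coe, mem_restrictScalars]
    exact mem_adjoin_simple_self _ _

theorem hasMonomialSqrts_zero : HasMonomialSqrts K t ϑ 0 :=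
  fun η hη _ => ⟨η, hη, ∅, by simp, by simp⟩

theorem theta_notMem_tower (ht : Transcendental K t) {U : Fin n → K[X]} {i : Fin n}
    (hunit : ¬IsUnit (U i)) (hsf : Squarefree (U i)) (hcop : ∀ j ≠ i, IsCoprime (U i) (U j))
    (hϑ : ∀ j, ϑ j ^ 2 = aeval t (U j)) (h : HasMonomialSqrts K t ϑ i) :
    ϑ i ∉ tower K t ϑ i := by
  intro hi
  obtain ⟨k, hk, J, hJ, hk_eq⟩ := h _ hi (hϑ i ▸ aeval_mem_tower K _ 0)
  have hcopJ : IsCoprime (U i) (∏ j ∈ J, U j) :=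
    IsCoprime.prod_right fun j hj => hcop j (Fin.ne_of_lt (hJ j hj))
  refine ht.aeval_ne_sq_mul_aeval hsf hunit hcopJ (by rwa [tower_zero] at hk) ?_
  rw [← hϑ i, hk_eq, mul_pow, ← Finset.prod_pow, map_prod (aeval (R := K) t)]
  exact congrArg _ (Finset.prod_congr rfl fun j _ => hϑ j)

theorem hasMonomialSqrts_succ (h2 : (2 : L) ≠ 0) {i : Fin n} (hϑ0 : ϑ i ^ 2 ∈ tower K t ϑ 0)
    (hi : ϑ i ∉ tower K t ϑ i) (h : HasMonomialSqrts K t ϑ i) :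
    HasMonomialSqrts K t ϑ (i + 1) := by
  intro η hη hη2
  have hle : tower K t ϑ 0 ≤ tower K t ϑ i := tower_mono K (Nat.zero_le _)
  obtain ⟨a, ha, hη_eq | hη_eq⟩ :=
    exists_eq_or_eq_mul_of_sq_mem h2 (hle hϑ0) hi (tower_succ_le K i hη) (hle hη2) <;> subst η
  · obtain ⟨k, hk, J, hJ, rfl⟩ := h a ha hη2
    exact ⟨k, hk, J, fun j hj => (hJ j hj).trans (Nat.lt_succ_self _), rfl⟩
  have hϑi : ϑ i ≠ 0 := fun h0 => hi (h0 ▸ zero_mem _)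
  have ha2 : a ^ 2 ∈ tower K t ϑ 0 := by
    rw [show a ^ 2 = (a * ϑ i) ^ 2 / ϑ i ^ 2 by field_simp]
    exact div_mem hη2 hϑ0
  obtain ⟨k, hk, J, hJ, rfl⟩ := h a ha ha2
  have hiJ : i ∉ J := fun hiJ => lt_irrefl _ (hJ i hiJ)
  refine ⟨k, hk, insert i J, fun j hj => ?_, by rw [Finset.prod_insert hiJ]; ring⟩
  rcases Finset.mem_insert.mp hj with rfl | hj
  · exact Nat.lt_succ_self _
  · exact (hJ j hj).trans (Nat.lt_succ_self _)

end Tower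

theorem fried_kollar_square_in_F0 (K L : Type*) [Field K] [Field L] [Algebra K L]
    (hchar : ringChar K ≠ 2)
    (t : L) (ht : Transcendental K t)
    (n : ℕ) (U : Fin n → Polynomial K)
    (hU : ∀ i, 0 < (U i).natDegree)
    (hcop : ∀ i j, i ≠ j → IsCoprime (U i) (U j))
    (hsf : ∀ i, Squarefree (U i))
    (ϑ : Fin n → L) (hϑ : ∀ i, (ϑ i) ^ 2 = Polynomial.aeval t (U i))
    (F : ℕ → IntermediateField K L)
    (hF : ∀ m : ℕ, F m =
      IntermediateField.adjoin K ({t} ∪ (ϑ '' {j : Fin n | (j : ℕ) < m}))) :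
    ∀ i : Fin n, ∀ η : L, η ∈ F ((i : ℕ) + 1) → η ^ 2 ∈ F 0 →
      ∃ k ∈ F 0, ∃ J : Finset (Fin n), (∀ j ∈ J, (j : ℕ) ≤ (i : ℕ)) ∧
        η = k * ∏ j ∈ J, ϑ j := by
  obtain rfl : F = tower K t ϑ := funext hF
  have h2 : (2 : L) ≠ 0 := by
    simpa only [map_ofNat, map_zero] using
      (algebraMap K L).injective.ne (Ring.two_ne_zero hchar)
  have hϑ0 : ∀ j, ϑ j ^ 2 ∈ tower K t ϑ 0 := fun j => by
    rw [hϑ]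
    exact aeval_mem_tower K _ 0
  have hroots : ∀ m ≤ n, HasMonomialSqrts K t ϑ m := by
    intro m
    induction m with
    | zero => exact fun _ => hasMonomialSqrts_zero K
    | succ m ih =>
      intro hm
      obtain ⟨i, rfl⟩ : ∃ i : Fin n, (i : ℕ) = m := ⟨⟨m, hm⟩, rfl⟩
      have hi : HasMonomialSqrts K t ϑ i := ih i.isLt.le
      refine hasMonomialSqrts_succ K h2 (hϑ0 i) ?_ hi
      exact theta_notMem_tower K ht (not_isUnit_of_natDegree_pos _ (hU i)) (hsf i)
        (fun j hj => hcop i j hj.symm) hϑ hi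
  intro i η hη hη2
  obtain ⟨k, hk, J, hJ, rfl⟩ := hroots (i + 1) i.isLt η hη hη2
  exact ⟨k, hk, J, fun j hj => Nat.lt_succ_iff.mp (hJ j hj), rfl⟩
end

section
/- Let K be a field of characteristic different from 2, t transcendental over K, U₁,…,Uₙ pairwise coprime nonconstant squarefree polynomials in K[t], ϑᵢ² = Uᵢ, and Fᵢ = K(t,ϑ₁,…,ϑᵢ). Then for each 1 ≤ i ≤ n: every element of Fᵢ that is algebraic over K already lies in K. -/
/-!
Write `η ∈ F_{m+1} = F_m(ϑ)` as `a + bϑ` with `a, b ∈ F_m`. Both `ϑ` and `-ϑ` are roots of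
`X² - ϑ²` over `F_m`, so if `η` is algebraic over `K` so is `a - bϑ`, hence so are `a` and `bϑ`
(char ≠ 2). By induction `a ∈ K` and `(bϑ)² = c ∈ K`.

An element of `F_m` whose square lies in `K(t)` is of the form `f · ∏_{j ∈ S} ϑ_j` with
`f ∈ K(t)` and `S ⊆ {j < m}` (comparing coefficients of `(a + bϑ)² ∈ F_m` forces `ab = 0`).
Applied to `bϑ` this gives `c = f² ∏_{j ∈ S} U_j(t)`, impossible for `S ≠ ∅`: a squarefree
nonconstant `V` coprime to `W` never satisfies `V s² = r² W` with `s ≠ 0`, by descent on `s`.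
So `bϑ ∈ K(t)`, and `K` is algebraically closed in `K(t)`. The same descent shows `ϑ_m ∉ F_m`,
which is what makes `F_{m+1} / F_m` quadratic.
-/

open Polynomial IntermediateField

theorem Squarefree.mul_sq_ne_sq_mul_s14 {R : Type*} [CommRing R] [IsDomain R] [DecompositionMonoid R]
    [WfDvdMonoid R] {V W : R} (hV : Squarefree V) (hVu : ¬IsUnit V) (hVW : IsCoprime V W)
    (r : R) {s : R} (hs : s ≠ 0) : V * s ^ 2 ≠ r ^ 2 * W := by
  have hV0 : V ≠ 0 := fun h => hVu (by simpa [h] using hV 0)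
  induction s using (wellFounded_dvdNotUnit (α := R)).induction generalizing r with
  | _ s ih =>
  intro h
  obtain ⟨r, rfl⟩ :=
    (hV.dvd_pow_iff_dvd two_ne_zero).mp (hVW.dvd_of_dvd_mul_right ⟨s ^ 2, h.symm⟩)
  have hs' : s ^ 2 = V * (r ^ 2 * W) := mul_left_cancel₀ hV0 (by linear_combination h)
  obtain ⟨s, rfl⟩ := (hV.dvd_pow_iff_dvd two_ne_zero).mp ⟨_, hs'⟩
  have hs0 : s ≠ 0 := right_ne_zero_of_mul hs
  exact ih s ⟨hs0, V, hVu, mul_comm _ _⟩ r hs0 (mul_left_cancel₀ hV0 (by linear_combination hs'))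

section Transcendental

variable {K L : Type*} [Field K] [Field L] [Algebra K L] {t : L}

theorem Transcendental.exists_algebraMap_eq_of_mem_adjoin (ht : Transcendental K t) {x : L}
    (hx : x ∈ K⟮t⟯) (halg : IsAlgebraic K x) : ∃ c : K, algebraMap K L c = x := by
  set e := RatFunc.algEquivOfTranscendental t ht
  have hu : IsAlgebraic K (e.symm ⟨x, hx⟩) :=
    ((isAlgebraic_iff (x := (⟨x, hx⟩ : K⟮t⟯))).mpr halg).algHom e.symm.toAlgHom
  obtain ⟨c, hc⟩ : ∃ c, e.symm ⟨x, hx⟩ = RatFunc.C c := by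
    by_contra h
    exact RatFunc.transcendental_of_ne_C _ h hu
  refine ⟨c, ?_⟩
  simpa [← RatFunc.algebraMap_eq_C] using (congrArg (fun y => ((e y : K⟮t⟯) : L)) hc).symm

theorem Transcendental.sq_mul_aeval_ne_aeval (ht : Transcendental K t) {V W : K[X]}
    (hV : Squarefree V) (hVdeg : 0 < V.natDegree) (hVW : IsCoprime V W) {f : L}
    (hf : f ∈ K⟮t⟯) : f ^ 2 * Polynomial.aeval t V ≠ Polynomial.aeval t W := by
  intro h
  obtain ⟨p, q, rfl⟩ := (mem_adjoin_simple_iff K f).mp hf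
  have hinj : Function.Injective (Polynomial.aeval t : K[X] →ₐ[K] L) :=
    transcendental_iff_injective.mp ht
  have hVu := not_isUnit_of_natDegree_pos V hVdeg
  have hW : Polynomial.aeval t W ≠ 0 := by
    rw [map_ne_zero_iff _ hinj]
    rintro rfl
    exact hVu (isCoprime_zero_right.mp hVW)
  have hq : Polynomial.aeval t q ≠ 0 := fun hq => hW (by simp [← h, hq])
  have hp : p ≠ 0 := by rintro rfl; exact hW (by simp [← h])
  refine hV.mul_sq_ne_sq_mul_s14 hVu hVW q hp (hinj ?_)
  simp only [map_mul, map_pow]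
  rw [← h]
  field_simp

end Transcendental

section Quadratic

variable {K L : Type*} [Field K] [Field L] [Algebra K L] {E : IntermediateField K L} {ϑ : L}

theorem Polynomial.aeval_eq_coeff_modByMonic_of_sq_eq {R A : Type*} [CommRing R] [Nontrivial R]
    [CommRing A] [Algebra R A] (r : R[X]) {u : R} {y : A} (hy : y ^ 2 = algebraMap R A u) :
    aeval y r = algebraMap R A ((r %ₘ (X ^ 2 - C u)).coeff 0) +
      algebraMap R A ((r %ₘ (X ^ 2 - C u)).coeff 1) * y := by
  have hdeg : (r %ₘ (X ^ 2 - C u)).natDegree ≤ 1 := by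
    have := natDegree_modByMonic_lt r (monic_X_pow_sub_C u two_ne_zero) (by
      intro h; have := congrArg natDegree h; simp at this)
    rw [natDegree_X_pow_sub_C] at this
    omega
  conv_lhs => rw [← aeval_modByMonic_eq_self_of_root (q := X ^ 2 - C u) (by simp [hy]),
    eq_X_add_C_of_natDegree_le_one hdeg]
  simp only [map_add, map_mul, aeval_C, aeval_X]
  ring

theorem isIntegral_of_sq_mem (hu : ϑ ^ 2 ∈ E) : IsIntegral E ϑ :=
  ⟨X ^ 2 - C ⟨_, hu⟩, monic_X_pow_sub_C _ two_ne_zero, by simp⟩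

theorem exists_add_mul_eq_of_mem_adjoin (hu : ϑ ^ 2 ∈ E) {x : L} (hx : x ∈ E⟮ϑ⟯) :
    ∃ a ∈ E, ∃ b ∈ E, x = a + b * ϑ := by
  rw [← mem_toSubalgebra,
    adjoin_simple_toSubalgebra_of_isAlgebraic (isIntegral_of_sq_mem hu).isAlgebraic,
    Algebra.adjoin_singleton_eq_range_aeval] at hx
  obtain ⟨r, rfl⟩ := hx
  exact ⟨_, SetLike.coe_mem _, _, SetLike.coe_mem _,
    aeval_eq_coeff_modByMonic_of_sq_eq r (u := ⟨_, hu⟩) rfl⟩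

theorem exists_aeval_add_mul_eq (hu : ϑ ^ 2 ∈ E) (P : K[X]) {a b : L} (ha : a ∈ E)
    (hb : b ∈ E) : ∃ A ∈ E, ∃ B ∈ E,
      aeval (a + b * ϑ) P = A + B * ϑ ∧ aeval (a - b * ϑ) P = A - B * ϑ := by
  set r : E[X] := (P.map (algebraMap K E)).comp (C ⟨a, ha⟩ + C ⟨b, hb⟩ * X)
  have hr (y : L) : aeval y r = aeval (a + b * y) P := by
    simp [r, aeval_comp, aeval_map_algebraMap]
  -- `ϑ` and `-ϑ` are both roots of `X ^ 2 - ϑ ^ 2`, so one remainder of `r` serves both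
  set q := r %ₘ (X ^ 2 - C ⟨_, hu⟩)
  refine ⟨q.coeff 0, SetLike.coe_mem _, q.coeff 1, SetLike.coe_mem _, ?_, ?_⟩
  · rw [← hr]
    exact aeval_eq_coeff_modByMonic_of_sq_eq r (u := ⟨_, hu⟩) rfl
  · rw [sub_eq_add_neg, ← mul_neg, ← hr, sub_eq_add_neg, ← mul_neg]
    exact aeval_eq_coeff_modByMonic_of_sq_eq r (u := ⟨_, hu⟩) (neg_sq ϑ)

theorem eq_zero_of_add_mul_eq_zero (hϑ : ϑ ∉ E) {a b : L} (ha : a ∈ E) (hb : b ∈ E)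
    (h : a + b * ϑ = 0) : a = 0 ∧ b = 0 := by
  obtain rfl | hb0 := eq_or_ne b 0
  · simpa using h
  · refine absurd ?_ hϑ
    rw [show ϑ = -a / b by field_simp; linear_combination h]
    exact E.div_mem (E.neg_mem ha) hb

theorem isAlgebraic_of_isAlgebraic_add_mul (hu : ϑ ^ 2 ∈ E) (hϑ : ϑ ∉ E) (h2 : (2 : L) ≠ 0)
    {a b : L} (ha : a ∈ E) (hb : b ∈ E) (halg : IsAlgebraic K (a + b * ϑ)) :
    IsAlgebraic K a ∧ IsAlgebraic K (b * ϑ) := by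
  obtain ⟨A, hA, B, hB, hplus, hminus⟩ :=
    exists_aeval_add_mul_eq hu (minpoly K (a + b * ϑ)) ha hb
  obtain ⟨rfl, rfl⟩ := eq_zero_of_add_mul_eq_zero hϑ hA hB (hplus ▸ minpoly.aeval K _)
  have halg' : IsAlgebraic K (a - b * ϑ) :=
    ⟨_, minpoly.ne_zero halg.isIntegral, by simpa using hminus⟩
  simp only [← mem_algebraicClosure_iff] at halg halg' ⊢
  constructor
  · rw [show a = (a + b * ϑ + (a - b * ϑ)) / 2 by field_simp; ring]
    exact div_mem (add_mem halg halg') (ofNat_mem _ 2)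
  · rw [show b * ϑ = (a + b * ϑ - (a - b * ϑ)) / 2 by field_simp; ring]
    exact div_mem (sub_mem halg halg') (ofNat_mem _ 2)

theorem eq_zero_or_eq_zero_of_sq_mem (hu : ϑ ^ 2 ∈ E) (hϑ : ϑ ∉ E) (h2 : (2 : L) ≠ 0)
    {a b : L} (ha : a ∈ E) (hb : b ∈ E) (hsq : (a + b * ϑ) ^ 2 ∈ E) : a = 0 ∨ b = 0 := by
  have hA : a * a + b * b * ϑ ^ 2 - (a + b * ϑ) ^ 2 ∈ E :=
    sub_mem (add_mem (mul_mem ha ha) (mul_mem (mul_mem hb hb) hu)) hsq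
  have hB : 2 * a * b ∈ E := mul_mem (mul_mem (ofNat_mem _ 2) ha) hb
  simpa [h2] using (eq_zero_of_add_mul_eq_zero hϑ hA hB (by ring)).2

end Quadratic

section Tower

variable {K L : Type*} [Field K] [Field L] [Algebra K L]

variable (K) in
/-- The paper's `F_m = K(t, ϑ₁, …, ϑ_m)`; here `ϑ` is indexed from `0`. -/
def towerField (t : L) {n : ℕ} (ϑ : Fin n → L) (m : ℕ) : IntermediateField K L :=
  adjoin K ({t} ∪ ϑ '' {j : Fin n | (j : ℕ) < m})

variable {t : L} {n : ℕ} {ϑ : Fin n → L}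

theorem towerField_zero : towerField K t ϑ 0 = K⟮t⟯ := by
  simp [towerField]

theorem towerField_succ (i : Fin n) :
    towerField K t ϑ (i + 1) = (towerField K t ϑ i)⟮ϑ i⟯.restrictScalars K := by
  have : {j : Fin n | (j : ℕ) < i + 1} = {j : Fin n | (j : ℕ) < i} ∪ {i} := by
    ext j
    simp only [Set.mem_ofPred_eq, Set.mem_union, Set.mem_singleton_iff, Fin.ext_iff]
    omega
  rw [towerField, towerField, adjoin_adjoin_left, this, Set.image_union, Set.image_singleton,
    Set.union_assoc]

theorem mem_towerField_succ_iff (i : Fin n) {x : L} :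
    x ∈ towerField K t ϑ (i + 1) ↔ x ∈ (towerField K t ϑ i)⟮ϑ i⟯ := by
  rw [towerField_succ, mem_restrictScalars]

theorem adjoin_le_towerField (m : ℕ) : K⟮t⟯ ≤ towerField K t ϑ m :=
  adjoin.mono _ _ _ Set.subset_union_left

theorem towerField_mono : Monotone (towerField K t ϑ) := fun _ _ h =>
  adjoin.mono _ _ _ <| Set.union_subset_union_right _ <| Set.image_mono fun _ hj => hj.trans_le h

theorem exists_eq_mul_prod_of_sq_mem (h2 : (2 : L) ≠ 0) (hsq : ∀ i : Fin n, ϑ i ^ 2 ∈ K⟮t⟯)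
    {m : ℕ} (hm : m ≤ n) (hnot : ∀ i : Fin n, (i : ℕ) < m → ϑ i ∉ towerField K t ϑ i) {x : L}
    (hx : x ∈ towerField K t ϑ m) (hx2 : x ^ 2 ∈ K⟮t⟯) :
    ∃ S : Finset (Fin n), (∀ j ∈ S, (j : ℕ) < m) ∧ ∃ f ∈ K⟮t⟯, x = f * ∏ j ∈ S, ϑ j := by
  induction m generalizing x with
  | zero => exact ⟨∅, by simp, x, by rwa [towerField_zero] at hx, by simp⟩
  | succ m ih =>
  set i : Fin n := ⟨m, hm⟩
  have hu : ϑ i ^ 2 ∈ towerField K t ϑ m := adjoin_le_towerField m (hsq i)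
  have hϑ : ϑ i ∉ towerField K t ϑ m := hnot i m.lt_succ_self
  have ih' := @ih (Nat.le_of_succ_le hm) fun j hj => hnot j (hj.trans m.lt_succ_self)
  obtain ⟨a, ha, b, hb, rfl⟩ :=
    exists_add_mul_eq_of_mem_adjoin hu ((mem_towerField_succ_iff i).mp hx)
  rcases eq_zero_or_eq_zero_of_sq_mem hu hϑ h2 ha hb (adjoin_le_towerField m hx2) with rfl | rfl
  · have hϑ0 : ϑ i ≠ 0 := fun h => hϑ (h ▸ zero_mem _)
    have hb2 : b ^ 2 ∈ K⟮t⟯ := by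
      rw [show b ^ 2 = (0 + b * ϑ i) ^ 2 / ϑ i ^ 2 by field_simp; ring]
      exact div_mem hx2 (hsq i)
    obtain ⟨S, hS, f, hf, rfl⟩ := ih' hb hb2
    have hiS : i ∉ S := fun hi => (hS i hi).false
    refine ⟨insert i S, ?_, f, hf, ?_⟩
    · simpa [Finset.forall_mem_insert, i] using fun j hj => (hS j hj).trans m.lt_succ_self
    · rw [Finset.prod_insert hiS]; ring
  · obtain ⟨S, hS, f, hf, h⟩ := ih' ha (by simpa using hx2)
    exact ⟨S, fun j hj => (hS j hj).trans m.lt_succ_self, f, hf, by simpa using h⟩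

variable {U : Fin n → K[X]}

theorem sq_prod_eq_aeval_prod (hϑ : ∀ i, ϑ i ^ 2 = aeval t (U i)) (S : Finset (Fin n)) :
    (∏ j ∈ S, ϑ j) ^ 2 = aeval t (∏ j ∈ S, U j) := by
  rw [← Finset.prod_pow, map_prod]
  exact Finset.prod_congr rfl fun j _ => hϑ j

theorem sq_mem_adjoin (hϑ : ∀ i, ϑ i ^ 2 = aeval t (U i)) (i : Fin n) : ϑ i ^ 2 ∈ K⟮t⟯ :=
  hϑ i ▸ algebra_adjoin_le_adjoin K _ (aeval_mem_adjoin_singleton K t)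

theorem notMem_towerField (ht : Transcendental K t) (hU : ∀ i, 0 < (U i).natDegree)
    (hcop : ∀ i j, i ≠ j → IsCoprime (U i) (U j)) (hsf : ∀ i, Squarefree (U i))
    (hϑ : ∀ i, ϑ i ^ 2 = aeval t (U i)) (h2 : (2 : L) ≠ 0) (i : Fin n) :
    ϑ i ∉ towerField K t ϑ i := by
  induction i using WellFoundedLT.induction with
  | ind i ih =>
  intro hmem
  obtain ⟨S, hS, f, hf, hfeq⟩ := exists_eq_mul_prod_of_sq_mem h2 (sq_mem_adjoin hϑ) i.is_lt.le
    ih hmem (sq_mem_adjoin hϑ i)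
  have hf0 : f ≠ 0 := by
    rintro rfl
    refine ne_zero_of_natDegree_gt (hU i) (transcendental_iff_injective.mp ht ?_)
    rw [← hϑ, hfeq, map_zero]
    ring
  refine ht.sq_mul_aeval_ne_aeval (hsf i) (hU i)
    (IsCoprime.prod_right fun j hj => hcop i j fun h => (hS j hj).ne (by rw [h])) (inv_mem hf) ?_
  rw [← hϑ, ← sq_prod_eq_aeval_prod hϑ, hfeq]
  field_simp

theorem mem_adjoin_of_sq_eq_algebraMap (ht : Transcendental K t)
    (hU : ∀ i, 0 < (U i).natDegree) (hcop : ∀ i j, i ≠ j → IsCoprime (U i) (U j))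
    (hsf : ∀ i, Squarefree (U i)) (hϑ : ∀ i, ϑ i ^ 2 = aeval t (U i)) (h2 : (2 : L) ≠ 0)
    {m : ℕ} (hm : m ≤ n) {y : L} (hy : y ∈ towerField K t ϑ m) {c : K}
    (hc : y ^ 2 = algebraMap K L c) : y ∈ K⟮t⟯ := by
  obtain ⟨S, -, f, hf, rfl⟩ := exists_eq_mul_prod_of_sq_mem h2 (sq_mem_adjoin hϑ) hm
    (fun i _ => notMem_towerField ht hU hcop hsf hϑ h2 i) hy (hc ▸ _root_.algebraMap_mem _ c)
  rcases S.eq_empty_or_nonempty with rfl | ⟨j, hj⟩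
  · simpa using hf
  obtain rfl | hc0 := eq_or_ne c 0
  · rw [map_zero, pow_eq_zero_iff two_ne_zero] at hc
    exact hc ▸ zero_mem _
  have hprod0 : ∏ j ∈ S, U j ≠ 0 :=
    Finset.prod_ne_zero_iff.mpr fun j _ => ne_zero_of_natDegree_gt (hU j)
  refine absurd ?_ (ht.sq_mul_aeval_ne_aeval (V := ∏ j ∈ S, U j) (W := C c)
    (Finset.squarefree_prod_of_pairwise_isCoprime
      (fun a _ b _ hab => (hcop a b hab).isRelPrime) fun j _ => hsf j)
    ((hU j).trans_le (natDegree_le_of_dvd (Finset.dvd_prod_of_mem U hj) hprod0))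
    ⟨0, C c⁻¹, by rw [zero_mul, zero_add, ← C_mul, inv_mul_cancel₀ hc0, C_1]⟩ hf)
  rw [aeval_C, ← hc, mul_pow, sq_prod_eq_aeval_prod hϑ]

theorem exists_algebraMap_eq_of_mem_towerField (ht : Transcendental K t)
    (hU : ∀ i, 0 < (U i).natDegree) (hcop : ∀ i j, i ≠ j → IsCoprime (U i) (U j))
    (hsf : ∀ i, Squarefree (U i)) (hϑ : ∀ i, ϑ i ^ 2 = aeval t (U i)) (h2 : (2 : L) ≠ 0)
    {m : ℕ} (hm : m ≤ n) {x : L} (hx : x ∈ towerField K t ϑ m) (halg : IsAlgebraic K x) :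
    ∃ c : K, algebraMap K L c = x := by
  induction m generalizing x with
  | zero => exact ht.exists_algebraMap_eq_of_mem_adjoin (by rwa [towerField_zero] at hx) halg
  | succ m ih =>
  set i : Fin n := ⟨m, hm⟩
  have hu : ϑ i ^ 2 ∈ towerField K t ϑ m := adjoin_le_towerField m (sq_mem_adjoin hϑ i)
  obtain ⟨a, ha, b, hb, rfl⟩ :=
    exists_add_mul_eq_of_mem_adjoin hu ((mem_towerField_succ_iff i).mp hx)
  obtain ⟨haalg, hbalg⟩ := isAlgebraic_of_isAlgebraic_add_mul hu
    (notMem_towerField ht hU hcop hsf hϑ h2 i) h2 ha hb halg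
  obtain ⟨ca, rfl⟩ := ih (Nat.le_of_succ_le hm) ha haalg
  obtain ⟨c, hc⟩ := ih (Nat.le_of_succ_le hm)
    (show (b * ϑ i) ^ 2 ∈ _ by rw [mul_pow]; exact mul_mem (pow_mem hb 2) hu) (hbalg.pow 2)
  have hbϑ : b * ϑ i ∈ towerField K t ϑ (m + 1) := mul_mem (towerField_mono m.le_succ hb)
    ((mem_towerField_succ_iff i).mpr (mem_adjoin_simple_self _ _))
  obtain ⟨cb, hcb⟩ := ht.exists_algebraMap_eq_of_mem_adjoin
    (mem_adjoin_of_sq_eq_algebraMap ht hU hcop hsf hϑ h2 hm hbϑ hc.symm) hbalg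
  exact ⟨ca + cb, by rw [map_add, hcb]⟩

end Tower

theorem fried_kollar_algebraic_mem (K L : Type*) [Field K] [Field L] [Algebra K L]
    (hchar : ringChar K ≠ 2)
    (t : L) (ht : Transcendental K t)
    (n : ℕ) (U : Fin n → Polynomial K)
    (hU : ∀ i, 0 < (U i).natDegree)
    (hcop : ∀ i j, i ≠ j → IsCoprime (U i) (U j))
    (hsf : ∀ i, Squarefree (U i))
    (ϑ : Fin n → L) (hϑ : ∀ i, (ϑ i) ^ 2 = Polynomial.aeval t (U i))
    (F : ℕ → IntermediateField K L)
    (hF : ∀ m : ℕ, F m =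
      IntermediateField.adjoin K ({t} ∪ (ϑ '' {j : Fin n | (j : ℕ) < m}))) :
    ∀ i : Fin n, ∀ η : L, η ∈ F ((i : ℕ) + 1) → IsAlgebraic K η →
      ∃ k : K, algebraMap K L k = η := by
  obtain rfl : F = towerField K t ϑ := funext hF
  have h2 : (2 : L) ≠ 0 := by
    simpa only [map_ofNat, map_zero] using (algebraMap K L).injective.ne (Ring.two_ne_zero hchar)
  intro i η hη halg
  exact exists_algebraMap_eq_of_mem_towerField ht hU hcop hsf hϑ h2 i.is_lt hη halg
end
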